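/- arXiv:1604.08325 — 2 statements merged into one kernel-verified Lean document; each statement's English description precedes it below -/
import Mathlib

section
/- Let Ω be a map from aff(1) to n-ary differential operators of the form Ω(X_h, F) = Σ_α B_α(x)·h'·F^{(α)} where B_α are smooth functions. If Ω satisfies the 1-cocycle condition Ω([X_{h₁},X_{h₂}], F) = X_{h₁}·Ω(X_{h₂},F) − X_{h₂}·Ω(X_{h₁},F) for all X_{h₁}, X_{h₂} ∈ aff(1), then each B_α is a constant function. -/
/-- `L^ν_h(f) = h f' + ν h' f`. -/
noncomputable def lieDer (ν : ℝ) (h f : ℝ → ℝ) : ℝ → ℝ :=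
  fun x => h x * deriv f x + ν * deriv h x * f x

/-- `F^{(α)} = f₁^{(α₁)} ⋯ fₙ^{(αₙ)}`. -/
noncomputable def Fder {n : ℕ} (α : Fin n → ℕ) (F : Fin n → ℝ → ℝ) : ℝ → ℝ :=
  fun x => ∏ i, iteratedDeriv (α i) (F i) x

/-- The action `X_h · A = L^μ_h ∘ A - A ∘ L^λ_h` of a vector field on an `n`-ary operator. -/
noncomputable def opAct {n : ℕ} (μ : ℝ) (lam : Fin n → ℝ) (h : ℝ → ℝ)
    (A : (Fin n → ℝ → ℝ) → ℝ → ℝ) (F : Fin n → ℝ → ℝ) : ℝ → ℝ :=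
  fun x => lieDer μ h (A F) x - ∑ i, A (Function.update F i (lieDer (lam i) h (F i))) x


lemma mono_iter (c : ℝ) (m : ℕ) : ∀ k, iteratedDeriv k (fun t : ℝ => (t - c)^m)
    = fun t => (m.descFactorial k : ℝ) * (t - c)^(m - k) := by
  intro k
  induction k with
  | zero => simp
  | succ k ih =>
    rw [iteratedDeriv_succ, ih]
    funext t
    rcases Nat.lt_or_ge k m with h | h
    · have hd : HasDerivAt (fun t : ℝ => (m.descFactorial k : ℝ) * (t - c)^(m - k))
          ((m.descFactorial k : ℝ) * (((m - k : ℕ) : ℝ) * (t - c)^(m - k - 1))) t := by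
        simpa using (((hasDerivAt_id t).sub_const c).pow (m-k)).const_mul
          ((m.descFactorial k : ℝ))
      rw [hd.deriv, Nat.descFactorial_succ, Nat.sub_sub, Nat.cast_mul]
      ring
    · have h1 : m - k = 0 := Nat.sub_eq_zero_of_le h
      have h2 : m.descFactorial (k+1) = 0 := Nat.descFactorial_eq_zero_iff_lt.mpr (Nat.lt_succ_of_le h)
      simp [h1, h2]

lemma mono_at (c : ℝ) (m k : ℕ) : iteratedDeriv k (fun t : ℝ => (t - c)^m) c
    = if k = m then (m.factorial : ℝ) else 0 := by
  rw [mono_iter]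
  rcases lt_trichotomy k m with h | h | h
  · simp [Nat.sub_ne_zero_of_lt h, h.ne, zero_pow]
  · simp [h, Nat.descFactorial_self]
  · simp [Nat.descFactorial_eq_zero_iff_lt.mpr h, h.ne']

lemma key (n : ℕ) (lam : Fin n → ℝ) (μ : ℝ)
    (S : Finset (Fin n → ℕ)) (B : (Fin n → ℕ) → ℝ → ℝ) (hB : ∀ α, ContDiff ℝ (⊤ : ℕ∞) (B α))
    (Ω : (ℝ → ℝ) → (Fin n → ℝ → ℝ) → ℝ → ℝ)
    (hΩ : ∀ h F x, Ω h F x = ∑ α ∈ S, B α x * deriv h x * Fder α F x)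
    (hcoc : ∀ a b c d : ℝ,
      ∀ (F : Fin n → ℝ → ℝ), (∀ i, ContDiff ℝ (⊤ : ℕ∞) (F i)) → ∀ x,
        Ω (fun t => (fun t => a + b * t) t * deriv (fun t => c + d * t) t
              - deriv (fun t => a + b * t) t * (fun t => c + d * t) t) F x
          = opAct μ lam (fun t => a + b * t) (Ω (fun t => c + d * t)) F x
            - opAct μ lam (fun t => c + d * t) (Ω (fun t => a + b * t)) F x) :
    ∀ (F : Fin n → ℝ → ℝ), (∀ i, ContDiff ℝ (⊤ : ℕ∞) (F i)) → ∀ x,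
      ∑ α ∈ S, deriv (B α) x * Fder α F x = 0 := by
  intro F hF x
  have hco := hcoc 1 0 0 1 F hF x
  have e1 : (fun t : ℝ => (1:ℝ) + 0 * t) = fun _ => (1:ℝ) := by funext t; ring
  have e2 : (fun t : ℝ => (0:ℝ) + 1 * t) = fun t => t := by funext t; ring
  simp only [e1, e2, deriv_id'', deriv_const'] at hco
  have ebr : (fun t : ℝ => ((1:ℝ) + 0 * t) * 1 - 0 * (0 + 1 * t)) = fun _ : ℝ => (1:ℝ) := by
    funext t; ring
  -- Ω of constants is zero
  have hΩ1 : ∀ G, Ω (fun _ : ℝ => (1:ℝ)) G = fun _ => 0 := by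
    intro G; funext y; rw [hΩ]; simp
  have hΩ2 : ∀ G, Ω (fun t : ℝ => t) G = fun y => ∑ α ∈ S, B α y * Fder α G y := by
    intro G; funext y; rw [hΩ]; simp [deriv_id'']
  -- LHS is zero
  have hL : Ω (fun t : ℝ => ((1:ℝ) + 0 * t) * 1 - 0 * (0 + 1 * t)) F x = 0 := by
    rw [ebr, hΩ1]
  -- second opAct is zero
  have T2 : opAct μ lam (fun t : ℝ => t) (Ω (fun _ : ℝ => (1:ℝ))) F x = 0 := by
    simp only [opAct, lieDer, hΩ1]; simp
  -- update with lieDer of constant 1 is deriv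
  have hup : ∀ i, lieDer (lam i) (fun _ : ℝ => (1:ℝ)) (F i) = deriv (F i) := by
    intro i; funext y; simp [lieDer]
  -- differentiability of iterated derivatives
  have hdF : ∀ (k : ℕ) i, Differentiable ℝ (iteratedDeriv k (F i)) := by
    intro k i
    exact (hF i).differentiable_iteratedDeriv k (by exact_mod_cast ENat.coe_lt_top k)
  set D : (Fin n → ℕ) → ℝ := fun α =>
    ∑ i, (∏ j ∈ Finset.univ.erase i, iteratedDeriv (α j) (F j) x) * iteratedDeriv (α i + 1) (F i) x
    with hD
  have hFd : ∀ α : Fin n → ℕ, HasDerivAt (Fder α F) (D α) x := by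
    intro α
    have h0 : ∀ i ∈ (Finset.univ : Finset (Fin n)),
        HasDerivAt (fun y => iteratedDeriv (α i) (F i) y) (iteratedDeriv (α i + 1) (F i) x) x := by
      intro i _
      rw [iteratedDeriv_succ]
      exact (hdF (α i) i x).hasDerivAt
    have := HasDerivAt.fun_finsetProd h0
    exact this
  have hBd : ∀ α : Fin n → ℕ, HasDerivAt (B α) (deriv (B α) x) x :=
    fun α => ((hB α).differentiable (by simp) x).hasDerivAt
  have hΩ2F : HasDerivAt (Ω (fun t : ℝ => t) F)
      (∑ α ∈ S, (deriv (B α) x * Fder α F x + B α x * D α)) x := by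
    rw [hΩ2]
    exact HasDerivAt.fun_sum (fun α _ => (hBd α).mul (hFd α))
  have hFup : ∀ (α : Fin n → ℕ) i, Fder α (Function.update F i (deriv (F i))) x
      = (∏ j ∈ Finset.univ.erase i, iteratedDeriv (α j) (F j) x)
        * iteratedDeriv (α i + 1) (F i) x := by
    intro α i
    unfold Fder
    rw [← Finset.prod_erase_mul _ _ (Finset.mem_univ i)]
    congr 1
    · exact Finset.prod_congr rfl fun j hj => by
        rw [Function.update_of_ne (Finset.ne_of_mem_erase hj)]
    · rw [Function.update_self, iteratedDeriv_succ']
  -- assemble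
  rw [hL, T2, sub_zero] at hco
  rw [opAct] at hco
  simp only [hup] at hco
  have hld : lieDer μ (fun _ : ℝ => (1:ℝ)) (Ω (fun t : ℝ => t) F) x
      = ∑ α ∈ S, (deriv (B α) x * Fder α F x + B α x * D α) := by
    simp [lieDer, hΩ2F.deriv]
  rw [hld] at hco
  have hsum : ∑ i, Ω (fun t : ℝ => t) (Function.update F i (deriv (F i))) x
      = ∑ α ∈ S, B α x * D α := by
    have : ∀ i, Ω (fun t : ℝ => t) (Function.update F i (deriv (F i))) x
        = ∑ α ∈ S, B α x * ((∏ j ∈ Finset.univ.erase i, iteratedDeriv (α j) (F j) x)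
            * iteratedDeriv (α i + 1) (F i) x) := by
      intro i
      rw [hΩ2]
      exact Finset.sum_congr rfl fun α _ => by rw [hFup]
    rw [Finset.sum_congr rfl fun i _ => this i, Finset.sum_comm]
    exact Finset.sum_congr rfl fun α _ => by rw [← Finset.mul_sum, hD]
  rw [hsum] at hco
  rw [Finset.sum_add_distrib] at hco
  linarith [hco]

/-- If `Ω(X_h, F) = Σ_α B_α(x) h' F^{(α)}` satisfies the 1-cocycle condition on
`aff(1) = Span(X_1, X_x)`, then each `B_α` is constant. -/
theorem cocycle_coeffs_constant (n : ℕ) (lam : Fin n → ℝ) (μ : ℝ)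
    (S : Finset (Fin n → ℕ)) (B : (Fin n → ℕ) → ℝ → ℝ) (hB : ∀ α, ContDiff ℝ (⊤ : ℕ∞) (B α))
    (Ω : (ℝ → ℝ) → (Fin n → ℝ → ℝ) → ℝ → ℝ)
    (hΩ : ∀ h F x, Ω h F x = ∑ α ∈ S, B α x * deriv h x * Fder α F x)
    (hcoc : ∀ a b c d : ℝ,
      ∀ (F : Fin n → ℝ → ℝ), (∀ i, ContDiff ℝ (⊤ : ℕ∞) (F i)) → ∀ x,
        Ω (fun t => (fun t => a + b * t) t * deriv (fun t => c + d * t) t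
              - deriv (fun t => a + b * t) t * (fun t => c + d * t) t) F x
          = opAct μ lam (fun t => a + b * t) (Ω (fun t => c + d * t)) F x
            - opAct μ lam (fun t => c + d * t) (Ω (fun t => a + b * t)) F x) :
    ∀ α ∈ S, ∀ x y : ℝ, B α x = B α y := by
  intro α₀ hα₀ x y
  suffices hz : ∀ z, deriv (B α₀) z = 0 by
    exact is_const_of_deriv_eq_zero ((hB α₀).differentiable (by simp)) hz x y
  intro z
  set F : Fin n → ℝ → ℝ := fun i => fun t => (t - z) ^ (α₀ i) with hFdef
  have hF : ∀ i, ContDiff ℝ (⊤ : ℕ∞) (F i) := fun i => (contDiff_id.sub contDiff_const).pow _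
  have h0 := key n lam μ S B hB Ω hΩ hcoc F hF z
  have hFder : ∀ β : Fin n → ℕ, Fder β F z
      = ∏ i, (if β i = α₀ i then ((α₀ i).factorial : ℝ) else 0) := by
    intro β
    unfold Fder
    exact Finset.prod_congr rfl fun i _ => mono_at z (α₀ i) (β i)
  have hself : Fder α₀ F z = ∏ i, ((α₀ i).factorial : ℝ) := by
    rw [hFder]; simp
  have hother : ∀ β ∈ S, β ≠ α₀ → deriv (B β) z * Fder β F z = 0 := by
    intro β _ hne
    rw [hFder]
    obtain ⟨i, hi⟩ : ∃ i, β i ≠ α₀ i := Function.ne_iff.mp hne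
    rw [Finset.prod_eq_zero (Finset.mem_univ i) (by simp [hi]), mul_zero]
  rw [Finset.sum_eq_single α₀ hother (fun h => absurd hα₀ h), hself] at h0
  have hfac : (∏ i, ((α₀ i).factorial : ℝ)) ≠ 0 :=
    Finset.prod_ne_zero_iff.mpr fun i _ => Nat.cast_ne_zero.mpr (Nat.factorial_ne_zero _)
  exact (mul_eq_zero.mp h0).resolve_right hfac
end

section
/- For each α ∈ ℕⁿ, the map Ω^α : aff(1) → D_{λ,μ} defined by Ω^α(X_h)(f₁⊗⋯⊗fₙ) = h'·f₁^{(α₁)}⋯fₙ^{(αₙ)} is a 1-cocycle, i.e., Ω^α([X,Y]) = X·Ω^α(Y) − Y·Ω^α(X) for all X, Y ∈ aff(1). -/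
@[simp] lemma deriv_affine (a b x : ℝ) : deriv (fun t => a + b * t) x = b := by
  have : HasDerivAt (fun t : ℝ => a + b * t) b x := by
    simpa using ((hasDerivAt_id x).const_mul b).const_add a
  exact this.deriv

lemma diff_iter {f : ℝ → ℝ} (hf : ContDiff ℝ (⊤ : ℕ∞) f) (k : ℕ) :
    Differentiable ℝ (iteratedDeriv k f) :=
  hf.differentiable_iteratedDeriv k (by exact_mod_cast ENat.coe_lt_top k)

lemma iter_lieDer (ν a b : ℝ) {f : ℝ → ℝ} (hf : ContDiff ℝ (⊤ : ℕ∞) f) (k : ℕ) (x : ℝ) :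
    iteratedDeriv k (lieDer ν (fun t => a + b * t) f) x
      = (a + b * x) * iteratedDeriv (k + 1) f x + (ν + k) * b * iteratedDeriv k f x := by
  induction k generalizing x with
  | zero =>
      simp [lieDer, iteratedDeriv_succ, iteratedDeriv_zero]
  | succ k ih =>
      have hfun : iteratedDeriv k (lieDer ν (fun t => a + b * t) f)
          = fun y => (a + b * y) * iteratedDeriv (k + 1) f y
              + (ν + k) * b * iteratedDeriv k f y := funext ih
      rw [iteratedDeriv_succ, hfun]
      have ha : HasDerivAt (fun y : ℝ => a + b * y) b x := by
        simpa using ((hasDerivAt_id x).const_mul b).const_add a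
      have h1 : HasDerivAt (iteratedDeriv (k + 1) f) (iteratedDeriv (k + 2) f x) x := by
        have := ((diff_iter hf (k + 1)) x).hasDerivAt
        rwa [← iteratedDeriv_succ] at this
      have h0 : HasDerivAt (iteratedDeriv k f) (iteratedDeriv (k + 1) f x) x := by
        have := ((diff_iter hf k) x).hasDerivAt
        rwa [← iteratedDeriv_succ] at this
      have h2 : HasDerivAt (fun y => (a + b * y) * iteratedDeriv (k + 1) f y
            + (ν + k) * b * iteratedDeriv k f y)
          ((b * iteratedDeriv (k + 1) f x + (a + b * x) * iteratedDeriv (k + 2) f x)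
            + (ν + k) * b * iteratedDeriv (k + 1) f x) x :=
        (ha.mul h1).add (h0.const_mul ((ν + k) * b))
      rw [h2.deriv]
      push_cast
      ring

lemma Fder_update {n : ℕ} (α : Fin n → ℕ) (F : Fin n → ℝ → ℝ) (i : Fin n) (g : ℝ → ℝ) (x : ℝ) :
    Fder α (Function.update F i g) x
      = iteratedDeriv (α i) g x * ∏ j ∈ Finset.univ.erase i, iteratedDeriv (α j) (F j) x := by
  unfold Fder
  have : (fun j => iteratedDeriv (α j) (Function.update F i g j) x)
      = Function.update (fun j => iteratedDeriv (α j) (F j) x) i (iteratedDeriv (α i) g x) := by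
    funext j
    by_cases hj : j = i
    · subst hj; simp
    · simp [Function.update_of_ne hj]
  rw [this, Finset.prod_update_of_mem (Finset.mem_univ i), Finset.sdiff_singleton_eq_erase]

lemma hasDerivAt_Fder {n : ℕ} (α : Fin n → ℕ) (F : Fin n → ℝ → ℝ)
    (hF : ∀ i, ContDiff ℝ (⊤ : ℕ∞) (F i)) (x : ℝ) :
    HasDerivAt (Fder α F)
      (∑ i, (∏ j ∈ Finset.univ.erase i, iteratedDeriv (α j) (F j) x)
        * iteratedDeriv (α i + 1) (F i) x) x := by
  have h : ∀ i ∈ (Finset.univ : Finset (Fin n)),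
      HasDerivAt (fun y => iteratedDeriv (α i) (F i) y) (iteratedDeriv (α i + 1) (F i) x) x := by
    intro i _
    have := ((diff_iter (hF i) (α i)) x).hasDerivAt
    rwa [← iteratedDeriv_succ] at this
  have := HasDerivAt.fun_finsetProd h
  simp only [smul_eq_mul] at this ⊢
  exact this

/-- For each multi-index `α`, the map `Ω^α(X_h)(F) = h' F^{(α)}` is a 1-cocycle on
`aff(1) = Span(X_1, X_x)` with values in `D_{λ,μ}`. -/
theorem omega_alpha_is_cocycle (n : ℕ) (lam : Fin n → ℝ) (μ : ℝ) (α : Fin n → ℕ) :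
    let Ω : (ℝ → ℝ) → (Fin n → ℝ → ℝ) → ℝ → ℝ := fun h F x => deriv h x * Fder α F x
    ∀ a b c d : ℝ,
      ∀ (F : Fin n → ℝ → ℝ), (∀ i, ContDiff ℝ (⊤ : ℕ∞) (F i)) → ∀ x,
        Ω (fun t => (fun t => a + b * t) t * deriv (fun t => c + d * t) t
              - deriv (fun t => a + b * t) t * (fun t => c + d * t) t) F x
          = opAct μ lam (fun t => a + b * t) (Ω (fun t => c + d * t)) F x
            - opAct μ lam (fun t => c + d * t) (Ω (fun t => a + b * t)) F x := by
  intro Ω a b c d F hF x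
  simp only [Ω, opAct]
  -- notation
  set P : Fin n → ℝ := fun i => iteratedDeriv (α i) (F i) x with hP
  set Q : Fin n → ℝ := fun i => iteratedDeriv (α i + 1) (F i) x with hQ
  set E : Fin n → ℝ := fun i => ∏ j ∈ Finset.univ.erase i, iteratedDeriv (α j) (F j) x with hE
  -- LHS is zero
  have hbr : (fun t => (fun t => a + b * t) t * deriv (fun t => c + d * t) t
        - deriv (fun t => a + b * t) t * (fun t => c + d * t) t)
      = fun _ : ℝ => a * d - b * c := by
    funext t
    simp only [deriv_affine]
    ring
  rw [hbr, deriv_const]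
  -- the two lieDer terms
  have hS : deriv (Fder α F) x = ∑ i, E i * Q i := (hasDerivAt_Fder α F hF x).deriv
  have hlie : ∀ e : ℝ, ∀ a' b' : ℝ,
      lieDer μ (fun t => a' + b' * t) (fun y => e * Fder α F y) x
        = (a' + b' * x) * (e * ∑ i, E i * Q i) + μ * b' * (e * Fder α F x) := by
    intro e a' b'
    have hdiff : DifferentiableAt ℝ (Fder α F) x := (hasDerivAt_Fder α F hF x).differentiableAt
    simp only [lieDer, deriv_affine]
    rw [deriv_const_mul e hdiff, hS]
  have hupd : ∀ (i : Fin n) (a' b' : ℝ),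
      Fder α (Function.update F i (lieDer (lam i) (fun t => a' + b' * t) (F i))) x
        = ((a' + b' * x) * Q i + (lam i + α i) * b' * P i) * E i := by
    intro i a' b'
    rw [Fder_update, iter_lieDer (lam i) a' b' (hF i) (α i) x]
  simp only [deriv_affine, hlie, hupd]
  have hsum : (∑ i, d * (((a + b * x) * Q i + (lam i + α i) * b * P i) * E i))
      - (∑ i, b * (((c + d * x) * Q i + (lam i + α i) * d * P i) * E i))
      = ((a + b * x) * d - (c + d * x) * b) * ∑ i, E i * Q i := by
    rw [← Finset.sum_sub_distrib, Finset.mul_sum]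
    exact Finset.sum_congr rfl fun i _ => by ring
  set S := ∑ i, E i * Q i
  set Pf := Fder α F x
  linear_combination hsum
end
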